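/- Let A and B be finite connected simple graphs, let b₁, b₂ be vertices of B with d_B(b₁, b₂) = 2, and let a be any vertex of A. Then the number of edges of the Cartesian product A □ B that are closer to the vertex (a, b₁) than to the vertex (a, b₂) equals m^B_{b₁2b₂} · |V(A)| + n^B_{b₁2b₂} · |E(A)|, where m^B_{b₁2b₂} is the number of edges f of B with d(b₁, f) < d(b₂, f) and n^B_{b₁2b₂} is the number of vertices b of B with d(b, b₁) < d(b, b₂). -/

import Mathlib

/-!
Distances in a box product of connected graphs add coordinatewise. Hence, for an edge in the
copy of `B` over a vertex `x` of `A`, the common term `d(a, x)` cancels and the edge is closer to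
`(a, b₁)` exactly when it is closer to `b₁` in `B`; for an edge in the copy of `A` over a vertex
`c` of `B`, the common term is the distance from `a` to the edge, and the edge is closer to
`(a, b₁)` exactly when `c` is closer to `b₁`. The edges of `A □ B` are the disjoint union of
`|V(A)|` copies of `E(B)` and `|V(B)|` copies of `E(A)`.
-/

open SimpleGraph

/-- Distance from a vertex to an edge (as an unordered pair): the minimum of
the distances to the two endpoints. -/
noncomputable def eDist {V : Type*} (G : SimpleGraph V) (g : V) (f : Sym2 V) : ℕ :=
  Sym2.lift ⟨fun x y => min (G.dist g x) (G.dist g y), fun _ _ => min_comm _ _⟩ f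

/-- The number of edges of `G` that are closer to `g` than to `h`. -/
noncomputable def mCloser {V : Type*} (G : SimpleGraph V) (g h : V) : ℕ :=
  {f ∈ G.edgeSet | eDist G g f < eDist G h f}.ncard

/-- The number of vertices of `G` that are closer to `g` than to `h`. -/
noncomputable def nCloser {V : Type*} (G : SimpleGraph V) (g h : V) : ℕ :=
  {a : V | G.dist a g < G.dist a h}.ncard

namespace SimpleGraph

variable {α β : Type*} {A : SimpleGraph α} {B : SimpleGraph β}

lemma Connected.dist_boxProd (hA : A.Connected) (hB : B.Connected) (x y : α × β) :
    (A □ B).dist x y = A.dist x.1 y.1 + B.dist x.2 y.2 := by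
  rw [dist, dist, dist, edist_boxProd,
    ENat.toNat_add (edist_ne_top_iff_reachable.mpr (hA.preconnected _ _))
      (edist_ne_top_iff_reachable.mpr (hB.preconnected _ _))]

@[simp] lemma eDist_mk {V : Type*} (G : SimpleGraph V) (g x y : V) :
    eDist G g s(x, y) = min (G.dist g x) (G.dist g y) := rfl

lemma eDist_boxProd_sym2Map_mk_right (hA : A.Connected) (hB : B.Connected) (x c : α) (b : β)
    (e : Sym2 β) :
    eDist (A □ B) (x, b) (e.map (Prod.mk c)) = A.dist x c + eDist B b e := by
  induction e using Sym2.inductionOn with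
  | hf y z => simp [hA.dist_boxProd hB, Nat.add_min_add_left]

lemma eDist_boxProd_sym2Map_mk_left (hA : A.Connected) (hB : B.Connected) (x : α) (b c : β)
    (e : Sym2 α) :
    eDist (A □ B) (x, b) (e.map (·, c)) = eDist A x e + B.dist b c := by
  induction e using Sym2.inductionOn with
  | hf y z => simp [hA.dist_boxProd hB, Nat.add_min_add_right]

lemma injective_sym2Map_mk_right :
    Function.Injective fun p : α × Sym2 β => p.2.map (Prod.mk p.1) := by
  rintro ⟨x, e⟩ ⟨x', e'⟩ h
  obtain rfl : e = e' := by
    simpa [Sym2.map_map, Function.comp_def] using congrArg (Sym2.map Prod.snd) h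
  induction e using Sym2.inductionOn with
  | hf y z =>
    simp only [Sym2.map_mk, Sym2.eq_iff, Prod.mk.injEq] at h
    simp only [Prod.mk.injEq, and_true]
    tauto

lemma injective_sym2Map_mk_left :
    Function.Injective fun p : β × Sym2 α => p.2.map (·, p.1) := by
  have : (fun p : β × Sym2 α => p.2.map (·, p.1)) =
      Sym2.map Prod.swap ∘ fun p : β × Sym2 α => p.2.map (Prod.mk p.1) := by
    funext p
    simp [Sym2.map_map]
  rw [this]
  exact (Sym2.map.injective Prod.swap_injective).comp injective_sym2Map_mk_right

variable (A B) in
lemma boxProd_edgeSet : (A □ B).edgeSet =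
    (fun p : α × Sym2 β => p.2.map (Prod.mk p.1)) '' (Set.univ ×ˢ B.edgeSet) ∪
      (fun p : β × Sym2 α => p.2.map (·, p.1)) '' (Set.univ ×ˢ A.edgeSet) := by
  apply subset_antisymm
  · intro f hf
    induction f using Sym2.inductionOn with
    | hf u v =>
      obtain ⟨u₁, u₂⟩ := u
      obtain ⟨v₁, v₂⟩ := v
      rcases boxProd_adj.mp hf with ⟨ha, rfl : u₂ = v₂⟩ | ⟨hb, rfl : u₁ = v₁⟩
      · exact .inr ⟨(u₂, s(u₁, v₁)), ⟨trivial, ha⟩, rfl⟩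
      · exact .inl ⟨(u₁, s(u₂, v₂)), ⟨trivial, hb⟩, rfl⟩
  · rintro f (⟨⟨x, e⟩, ⟨-, he⟩, rfl⟩ | ⟨⟨c, e⟩, ⟨-, he⟩, rfl⟩)
    · exact (A.boxProdRight B x).map_mem_edgeSet_iff.mpr he
    · exact (A.boxProdLeft B c).map_mem_edgeSet_iff.mpr he

variable (A) in
lemma disjoint_range_sym2Map_mk_right_image_edgeSet :
    Disjoint (Set.range fun p : α × Sym2 β => p.2.map (Prod.mk p.1))
      ((fun p : β × Sym2 α => p.2.map (·, p.1)) '' (Set.univ ×ˢ A.edgeSet)) := by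
  rw [Set.disjoint_left]
  rintro f ⟨⟨x, e⟩, rfl⟩ ⟨⟨c, e'⟩, ⟨-, he'⟩, h⟩
  have he : e' = e.map fun _ => x := by
    simpa [Sym2.map_map] using congrArg (Sym2.map Prod.fst) h
  induction e using Sym2.inductionOn
  simp_all

lemma ncard_sep_boxProd_edgeSet [Finite α] [Finite β] (P : Sym2 (α × β) → Prop) :
    {f ∈ (A □ B).edgeSet | P f}.ncard =
      {p : α × Sym2 β | p.2 ∈ B.edgeSet ∧ P (p.2.map (Prod.mk p.1))}.ncard +
        {p : β × Sym2 α | p.2 ∈ A.edgeSet ∧ P (p.2.map (·, p.1))}.ncard := by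
  have : {f ∈ (A □ B).edgeSet | P f} =
      (fun p : α × Sym2 β => p.2.map (Prod.mk p.1)) ''
          {p : α × Sym2 β | p.2 ∈ B.edgeSet ∧ P (p.2.map (Prod.mk p.1))} ∪
        (fun p : β × Sym2 α => p.2.map (·, p.1)) ''
          {p : β × Sym2 α | p.2 ∈ A.edgeSet ∧ P (p.2.map (·, p.1))} := by
    rw [boxProd_edgeSet]
    ext f
    aesop
  rw [this, Set.ncard_union_eq, Set.ncard_image_of_injective _ injective_sym2Map_mk_right,
    Set.ncard_image_of_injective _ injective_sym2Map_mk_left]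
  exact (disjoint_range_sym2Map_mk_right_image_edgeSet A).mono (Set.image_subset_range _ _)
    (Set.image_mono (t := Set.univ ×ˢ A.edgeSet) fun _ hp => ⟨Set.mem_univ _, hp.1⟩)

end SimpleGraph

theorem boxProd_mCloser_right_general {α β : Type*} [Fintype α] [Fintype β]
    (A : SimpleGraph α) (B : SimpleGraph β)
    (hA : A.Connected) (hB : B.Connected)
    (b₁ b₂ : β) (a : α) :
    mCloser (A.boxProd B) (a, b₁) (a, b₂) =
      mCloser B b₁ b₂ * Fintype.card α + nCloser B b₁ b₂ * A.edgeSet.ncard := by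
  have hVert : {p : α × Sym2 β | p.2 ∈ B.edgeSet ∧
      eDist (A □ B) (a, b₁) (p.2.map (Prod.mk p.1)) <
        eDist (A □ B) (a, b₂) (p.2.map (Prod.mk p.1))} =
      Set.univ ×ˢ {f ∈ B.edgeSet | eDist B b₁ f < eDist B b₂ f} := by
    ext ⟨x, e⟩
    simp [eDist_boxProd_sym2Map_mk_right hA hB]
  have hHoriz : {p : β × Sym2 α | p.2 ∈ A.edgeSet ∧
      eDist (A □ B) (a, b₁) (p.2.map (·, p.1)) < eDist (A □ B) (a, b₂) (p.2.map (·, p.1))} =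
      {b | B.dist b b₁ < B.dist b b₂} ×ˢ A.edgeSet := by
    ext ⟨c, e⟩
    simp [eDist_boxProd_sym2Map_mk_left hA hB, dist_comm, and_comm]
  rw [mCloser, ncard_sep_boxProd_edgeSet, hVert, hHoriz, Set.ncard_prod, Set.ncard_prod,
    Set.ncard_univ, Nat.card_eq_fintype_card, mCloser, nCloser]
  ring

theorem boxProd_mCloser_right {α β : Type*} [Fintype α] [Fintype β]
    (A : SimpleGraph α) (B : SimpleGraph β)
    (hA : A.Connected) (hB : B.Connected)
    (b₁ b₂ : β) (h : B.dist b₁ b₂ = 2) (a : α) :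
    mCloser (A.boxProd B) (a, b₁) (a, b₂) =
      mCloser B b₁ b₂ * Fintype.card α + nCloser B b₁ b₂ * A.edgeSet.ncard :=
  boxProd_mCloser_right_general A B hA hB b₁ b₂ a
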